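/- Let (Ω,F,P) be a probability space and X : [0,∞) → Ω → ℝ a process such that each X_t is F-measurable, almost every path t ↦ X_t(ω) is continuous, and for every t ∈ (0,∞) the law of X_t is absolutely continuous with respect to Lebesgue measure. Let B ⊆ ℝ be a Borel set whose topological boundary ∂B has Lebesgue measure zero. Then for every t ∈ [0,∞), for P-a.e. ω there exists N such that for all n ≥ N: X_{⌊nt⌋/n}(ω) ∈ B if and only if X_t(ω) ∈ B. -/

import Mathlib

/-!
`Λ_n(t) → t`, so along a continuous path `X_{Λ_n(t)} → X_t`. The indicator of `B` is locally
constant off `∂B`, and `X_t ∉ ∂B` almost surely because `∂B` is Lebesgue-null and the law of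
`X_t` is absolutely continuous (for `t = 0` there is nothing to prove, as `Λ_n(0) = 0`).
-/

open MeasureTheory
open scoped NNReal ENNReal Topology

/-- `Λ_n(t) := ⌊nt⌋/n`. -/
noncomputable def Lam (n : ℕ) (t : ℝ≥0) : ℝ≥0 := (⌊(n : ℝ≥0) * t⌋₊ : ℝ≥0) / (n : ℝ≥0)

open Filter

theorem coe_Lam (n : ℕ) (t : ℝ≥0) : (Lam n t : ℝ) = ⌊(t : ℝ) * n⌋₊ / n := by
  simp only [Lam, NNReal.coe_div, NNReal.coe_natCast, mul_comm (n : ℝ≥0)]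
  -- `⌊·⌋₊` on `ℝ≥0` is by definition the floor of the underlying real number
  rfl

theorem tendsto_Lam (t : ℝ≥0) : Tendsto (fun n => Lam n t) atTop (𝓝 t) := by
  rw [← NNReal.tendsto_coe]
  simp_rw [coe_Lam]
  exact (tendsto_nat_floor_mul_div_atTop t.2).comp tendsto_natCast_atTop_atTop

theorem eventually_mem_iff_of_notMem_frontier {α : Type*} [TopologicalSpace α] {s : Set α}
    {x : α} (hx : x ∉ frontier s) : ∀ᶠ y in 𝓝 x, (y ∈ s ↔ x ∈ s) := by
  by_cases hxs : x ∈ s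
  · filter_upwards [mem_interior_iff_mem_nhds.1 ((mem_interior_iff_notMem_frontier hxs).2 hx)]
      with y hy using iff_of_true hy hxs
  · rw [← frontier_compl] at hx
    filter_upwards [mem_interior_iff_mem_nhds.1
      ((mem_interior_iff_notMem_frontier (s := sᶜ) hxs).2 hx)]
      with y hy using iff_of_false hy hxs

theorem ae_notMem_of_absolutelyContinuous {Ω α : Type*} [MeasurableSpace Ω] [MeasurableSpace α]
    {P : Measure Ω} {μ : Measure α} {Y : Ω → α} (hY : Measurable Y) (hac : P.map Y ≪ μ)
    {s : Set α} (hs : MeasurableSet s) (h0 : μ s = 0) : ∀ᵐ ω ∂P, Y ω ∉ s := by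
  rw [ae_iff]
  simp only [not_not]
  exact (Measure.map_apply hY hs).symm.trans (hac h0)

theorem stmt_18_general {Ω : Type*} [MeasurableSpace Ω] (P : Measure Ω)
    (X : ℝ≥0 → Ω → ℝ) (hXt : ∀ u : ℝ≥0, Measurable fun ω => X u ω)
    (hcont : ∀ᵐ ω ∂P, Continuous fun u => X u ω)
    (habs : ∀ u : ℝ≥0, 0 < u → P.map (fun ω => X u ω) ≪ (volume : Measure ℝ))
    (B : Set ℝ) (hfr : (volume : Measure ℝ) (frontier B) = 0)
    (t : ℝ≥0) :
    ∀ᵐ ω ∂P, ∃ N : ℕ, ∀ n ≥ N, (X (Lam n t) ω ∈ B ↔ X t ω ∈ B) := by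
  rcases eq_zero_or_pos t with rfl | ht
  · exact .of_forall fun ω => ⟨0, fun n _ => by simp [Lam]⟩
  have hnotMem : ∀ᵐ ω ∂P, X t ω ∉ frontier B :=
    ae_notMem_of_absolutelyContinuous (hXt t) (habs t ht) isClosed_frontier.measurableSet hfr
  filter_upwards [hcont, hnotMem] with ω hpath hω
  have hlim : Tendsto (fun n => X (Lam n t) ω) atTop (𝓝 (X t ω)) :=
    (hpath.tendsto t).comp (tendsto_Lam t)
  exact eventually_atTop.1 (hlim.eventually (eventually_mem_iff_of_notMem_frontier hω))

/-- let `X` be a process with measurable marginals, a.e. continuous paths and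
absolutely continuous laws at positive times, and let `B ⊆ ℝ` be a Borel set whose boundary
has Lebesgue measure zero. Then for every `t ∈ [0,∞)`, almost surely the truth value of
`X_{⌊nt⌋/n} ∈ B` eventually agrees with that of `X_t ∈ B`. -/
theorem stmt_18 {Ω : Type*} [MeasurableSpace Ω] (P : Measure Ω) [IsProbabilityMeasure P]
    (X : ℝ≥0 → Ω → ℝ) (hXt : ∀ u : ℝ≥0, Measurable fun ω => X u ω)
    (hcont : ∀ᵐ ω ∂P, Continuous fun u => X u ω)
    (habs : ∀ u : ℝ≥0, 0 < u → P.map (fun ω => X u ω) ≪ (volume : Measure ℝ))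
    (B : Set ℝ) (hB : MeasurableSet B) (hfr : (volume : Measure ℝ) (frontier B) = 0)
    (t : ℝ≥0) :
    ∀ᵐ ω ∂P, ∃ N : ℕ, ∀ n ≥ N, (X (Lam n t) ω ∈ B ↔ X t ω ∈ B) :=
  stmt_18_general P X hXt hcont habs B hfr t
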